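/- arXiv:2104.07727 — 2 statements merged into one kernel-verified Lean document; each statement's English description precedes it below -/
import Mathlib

section
/- Let k ≥ 2 be an integer and let π be the PageRank vector of Γ(k) for α = 1 − 1/k. Then π_A < k·(1/3)^k + 3/(2(k+3)). -/
/-- Arc relation of the graph `Γ(k)` on vertex indices `0, ..., k+2`, where
vertex `0` is `C1`, vertex `1` is `C2`, vertex `i+1` is `B_i` for `1 ≤ i ≤ k`,
and vertex `k+2` is `A`.  `PRadj k j i` holds iff there is an arc from `j` to `i`. -/
def PRadj (k j i : ℕ) : Prop :=
  (j = 0 ∧ (i = 0 ∨ i = 1)) ∨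
  (j = 1 ∧ (i = 0 ∨ i = 1 ∨ i = 2)) ∨
  (2 ≤ j ∧ j ≤ k + 1 ∧ (i = 0 ∨ i = 1 ∨ i = j + 1)) ∨
  (j = k + 2 ∧ i = k + 2)

instance (k j i : ℕ) : Decidable (PRadj k j i) := by unfold PRadj; infer_instance

/-- Out-degree of vertex `j` in `Γ(k)`:  `deg(C1) = 2`, `deg(A) = 1`, all others `3`. -/
def PRdeg (k j : ℕ) : ℕ := if j = 0 then 2 else if j = k + 2 then 1 else 3

/-- The PageRank matrix `R_α` of `Γ(k)`:  entry `(i, j)` is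
`α / deg(j) + (1 - α)/(k+3)` if there is an arc from `j` to `i`, and `(1 - α)/(k+3)`
otherwise. -/
noncomputable def PRmat (k : ℕ) (α : ℝ) : Matrix (Fin (k + 3)) (Fin (k + 3)) ℝ :=
  fun i j =>
    if PRadj k j.1 i.1 then α / (PRdeg k j.1 : ℝ) + (1 - α) / ((k : ℝ) + 3)
    else (1 - α) / ((k : ℝ) + 3)

/-- `π` is a PageRank vector of `Γ(k)` for jumping parameter `α`:  it has nonnegative
entries summing to `1` and satisfies `R_α π = π`. -/
def IsPageRank (k : ℕ) (α : ℝ) (π : Fin (k + 3) → ℝ) : Prop :=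
  (∀ v, 0 ≤ π v) ∧ (∑ v, π v = 1) ∧ (PRmat k α).mulVec π = π

/-!
Along the path `C2 → B1 → ⋯ → Bk` every vertex receives exactly `α/3` of its predecessor's
mass plus the teleportation share `c = (1 - α)/(k + 3)`, so the distance of `π_{B_t}` from the
fixed point `s = c/(1 - α/3)` shrinks by the factor `α/3` at each step, and
`π_{Bk} ≤ s + (α/3)^k`.
The loop at `A` gives `(1 - α) π_A = c + (α/3) π_{Bk}`. For `α = 1 - 1/k` this reads
`π_A = 1/(k+3) + (k-1)/3 · π_{Bk}` with `s = 3/((k+3)(2k+1))`, and the bound follows from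
`(k-1)/(2k+1) < 1/2` and `(α/3)^k ≤ (1/3)^k`.
-/

open Finset Matrix

theorem le_div_add_pow_mul_of_le_add_mul {x : ℕ → ℝ} {c r : ℝ} {n : ℕ} (hr : 0 ≤ r)
    (hr1 : r ≠ 1) (hx : ∀ t < n, x (t + 1) ≤ c + r * x t) :
    x n ≤ c / (1 - r) + r ^ n * (x 0 - c / (1 - r)) := by
  induction n with
  | zero => simp
  | succ n ih =>
    have hfix : c + r * (c / (1 - r)) = c / (1 - r) := by
      field_simp [sub_ne_zero.mpr hr1.symm]; ring
    calc x (n + 1) ≤ c + r * x n := hx n n.lt_succ_self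
      _ ≤ c + r * (c / (1 - r) + r ^ n * (x 0 - c / (1 - r))) := by
        gcongr; exact ih fun t ht => hx t (ht.trans n.lt_succ_self)
      _ = c / (1 - r) + r ^ (n + 1) * (x 0 - c / (1 - r)) := by
        linear_combination hfix

theorem PRmat_mulVec_apply (k : ℕ) (α : ℝ) (π : Fin (k + 3) → ℝ) (i : Fin (k + 3)) :
    (PRmat k α *ᵥ π) i = (1 - α) / ((k : ℝ) + 3) * ∑ j, π j +
      ∑ j : Fin (k + 3), if PRadj k j i then α / PRdeg k j * π j else 0 := by
  simp only [mulVec, dotProduct, PRmat, mul_sum, ← sum_add_distrib]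
  refine sum_congr rfl fun j _ => ?_
  split_ifs <;> ring

namespace IsPageRank

variable {k : ℕ} {α : ℝ} {π : Fin (k + 3) → ℝ}

theorem le_one (hπ : IsPageRank k α π) (v : Fin (k + 3)) : π v ≤ 1 :=
  hπ.2.1 ▸ single_le_sum (fun i _ => hπ.1 i) (mem_univ v)

theorem apply_eq (hπ : IsPageRank k α π) (i : Fin (k + 3)) :
    π i = (1 - α) / ((k : ℝ) + 3) +
      ∑ j : Fin (k + 3), if PRadj k j i then α / PRdeg k j * π j else 0 := by
  conv_lhs => rw [← hπ.2.2, PRmat_mulVec_apply, hπ.2.1, mul_one]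

theorem apply_of_val_eq_succ (hπ : IsPageRank k α π) {i j : Fin (k + 3)} (hj : 1 ≤ (j : ℕ))
    (hjk : (j : ℕ) ≤ k) (hij : (i : ℕ) = j + 1) :
    π i = (1 - α) / ((k : ℝ) + 3) + α / 3 * π j := by
  rw [hπ.apply_eq, Fintype.sum_eq_single j]
  · have hdeg : PRdeg k j = 3 := by unfold PRdeg; rw [if_neg (by omega), if_neg (by omega)]
    rw [if_pos (by unfold PRadj; omega), hdeg]
    norm_num
  · intro b hb
    have := Fin.val_ne_of_ne hb
    rw [if_neg (by unfold PRadj; omega)]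

theorem apply_last (hπ : IsPageRank k α π) :
    π ⟨k + 2, (k + 2).lt_succ_self⟩ = (1 - α) / ((k : ℝ) + 3) + α / 3 * π ⟨k + 1, by omega⟩ +
      α * π ⟨k + 2, (k + 2).lt_succ_self⟩ := by
  refine (hπ.apply_eq _).trans ?_
  rw [Fintype.sum_eq_add ⟨k + 1, by omega⟩ ⟨k + 2, (k + 2).lt_succ_self⟩ (by simp)]
  · have hdeg₁ : PRdeg k (k + 1) = 3 := by
      unfold PRdeg; rw [if_neg (by omega), if_neg (by omega)]
    have hdeg₂ : PRdeg k (k + 2) = 1 := by unfold PRdeg; rw [if_neg (by omega), if_pos rfl]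
    rw [if_pos (show PRadj k (k + 1) (k + 2) by unfold PRadj; omega),
      if_pos (show PRadj k (k + 2) (k + 2) by unfold PRadj; omega), hdeg₁, hdeg₂]
    norm_num
    ring
  · rintro b ⟨hb₁, hb₂⟩
    simp only [Ne, Fin.ext_iff] at hb₁ hb₂
    rw [if_neg (show ¬PRadj k b (k + 2) by unfold PRadj; omega)]

theorem apply_last_eq (hπ : IsPageRank k α π) (hα : α ≠ 1) :
    π ⟨k + 2, (k + 2).lt_succ_self⟩ =
      1 / ((k : ℝ) + 3) + α / (3 * (1 - α)) * π ⟨k + 1, by omega⟩ := by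
  have h := hπ.apply_last
  have : 1 - α ≠ 0 := sub_ne_zero.mpr hα.symm
  field_simp at h ⊢
  linear_combination h

open Fin.NatCast in
theorem apply_Bk_le (hπ : IsPageRank k α π) (hα₀ : 0 ≤ α) (hα₁ : α ≤ 1) :
    π ⟨k + 1, by omega⟩ ≤ (1 - α) / ((k : ℝ) + 3) / (1 - α / 3) + (α / 3) ^ k := by
  have hval {t : ℕ} (ht : t ≤ k + 1) : ((t : Fin (k + 3)) : ℕ) = t :=
    Fin.val_cast_of_lt (by omega)
  have h := le_div_add_pow_mul_of_le_add_mul (x := fun t : ℕ => π ((t + 1 : ℕ) : Fin (k + 3)))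
    (n := k) (by positivity) (by linarith) fun t ht =>
      (hπ.apply_of_val_eq_succ (by rw [hval (by omega)]; omega) (by rw [hval (by omega)]; omega)
        (by rw [hval (by omega), hval (by omega)])).le
  rw [zero_add, Nat.cast_one, show ((k + 1 : ℕ) : Fin (k + 3)) = ⟨k + 1, by omega⟩ from
    Fin.ext (hval le_rfl)] at h
  set s := (1 - α) / ((k : ℝ) + 3) / (1 - α / 3)
  have hs : 0 ≤ s := div_nonneg (div_nonneg (by linarith) (by positivity)) (by linarith)
  calc π ⟨k + 1, by omega⟩ ≤ s + (α / 3) ^ k * (π 1 - s) := h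
    _ ≤ s + (α / 3) ^ k := by
        gcongr
        exact mul_le_of_le_one_right (by positivity) (by linarith [hπ.le_one 1])

end IsPageRank

theorem pagerank_A_lt_of_Bk_le {K X q : ℝ} (hK : 1 ≤ K) (hq : 0 < q)
    (hX : X ≤ 3 / ((K + 3) * (2 * K + 1)) + q) :
    1 / (K + 3) + (K - 1) / 3 * X < K * q + 3 / (2 * (K + 3)) := by
  have hgap : K * q + 3 / (2 * (K + 3)) -
      (1 / (K + 3) + (K - 1) / 3 * (3 / ((K + 3) * (2 * K + 1)) + q)) =
      (2 * K + 1) / 3 * q + 3 / (2 * (K + 3) * (2 * K + 1)) := by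
    field_simp; ring
  calc 1 / (K + 3) + (K - 1) / 3 * X
      ≤ 1 / (K + 3) + (K - 1) / 3 * (3 / ((K + 3) * (2 * K + 1)) + q) := by
        gcongr
    _ < K * q + 3 / (2 * (K + 3)) := by
        have : 0 < (2 * K + 1) / 3 * q + 3 / (2 * (K + 3) * (2 * K + 1)) := by positivity
        linarith

/-- For `k ≥ 2` and `α = 1 - 1/k`, the PageRank vector satisfies
`π_A < k·(1/3)^k + 3/(2(k+3))`. -/
theorem pagerank_A_upper_bound (k : ℕ) (hk : 2 ≤ k) (π : Fin (k + 3) → ℝ)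
    (hπ : IsPageRank k (1 - 1 / (k : ℝ)) π) :
    π ⟨k + 2, by omega⟩ < (k : ℝ) * (1 / 3 : ℝ) ^ k + 3 / (2 * ((k : ℝ) + 3)) := by
  have hK : (2 : ℝ) ≤ k := by exact_mod_cast hk
  have hα₀ : 0 ≤ 1 - 1 / (k : ℝ) := by rw [sub_nonneg, div_le_one] <;> linarith
  have hα₁ : 1 - 1 / (k : ℝ) ≤ 1 := sub_le_self _ (by positivity)
  have hfix : (1 - (1 - 1 / (k : ℝ))) / ((k : ℝ) + 3) / (1 - (1 - 1 / (k : ℝ)) / 3) =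
      3 / (((k : ℝ) + 3) * (2 * k + 1)) := by
    have hden : 1 - (1 - 1 / (k : ℝ)) / 3 = (2 * k + 1) / (3 * k) := by field_simp; ring
    rw [sub_sub_cancel, hden]
    field_simp
  have hslope : (1 - 1 / (k : ℝ)) / (3 * (1 - (1 - 1 / (k : ℝ)))) = (k - 1) / 3 := by
    rw [sub_sub_cancel]
    field_simp
  have hBk := hπ.apply_Bk_le hα₀ hα₁
  rw [hfix] at hBk
  have hpow : ((1 - 1 / (k : ℝ)) / 3) ^ k ≤ (1 / 3) ^ k := by gcongr
  rw [hπ.apply_last_eq (by simp; omega), hslope]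
  exact pagerank_A_lt_of_Bk_le (by linarith) (by positivity) (by linarith)
end

section
/- For each integer k ≥ 2, let π(k) be the PageRank vector of Γ(k) for α = 1 − 1/k, and let σ(k) be the PageRank vector of Γ(k) for α = 1 given by σ(k)_A = 1 and σ(k)_v = 0 for all other vertices v. Then the Euclidean norm ‖σ(k) − π(k)‖₂ converges to √(67/50) as k → ∞. -/
/-!
The vertices `C1` and `C2` have the same in-neighbours, so `π C1 = π C2 =: a`; every `B_m` has
the single in-neighbour `B_{m-1}` (with `B_0 = C2`), of out-degree 3. Hence, with `r = α/3` and
`t = (1 - α)/(k + 3)`, the values `x_m` along the path `C2, B1, …, Bk` obey `x_{m+1} = t + r x_m`,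
so `x_m = r^m (a - d) + d` with `d` the fixed point of `x ↦ t + r x`. The equation at `A` reads
`(1 - α) π A = r^(k+1) (a - d) + d`, and `∑ π = 1` becomes a linear equation for `a`.
For `α = 1 - 1/k` one has `r → 1/3`, `k d → 0` and `k r^k → 0`, hence `a → 2/5`, `π A → 0` and
`‖σ - π‖² = a² + ∑_{m ≤ k} x_m² + (1 - π A)² → 4/25 + (4/25)/(1 - 1/9) + 1 = 67/50`.
-/

open Filter Topology Finset

theorem eq_pow_mul_add_of_affine_recurrence {R : Type*} [CommRing R] {x : ℕ → R} {r t d : R}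
    {n : ℕ} (hd : t + r * d = d) (hx : ∀ m < n, x (m + 1) = t + r * x m) :
    ∀ m ≤ n, x m = r ^ m * (x 0 - d) + d := by
  intro m hm
  induction m with
  | zero => ring
  | succ m ih =>
    rw [hx m hm, ih (by omega)]
    linear_combination hd

theorem sum_range_pow_mul_add {R : Type*} [CommSemiring R] (r c d : R) (n : ℕ) :
    ∑ m ∈ range n, (r ^ m * c + d) = c * ∑ m ∈ range n, r ^ m + n * d := by
  rw [sum_add_distrib, ← sum_mul, sum_const, card_range, nsmul_eq_mul, mul_comm]

theorem sum_range_sq_pow_mul_add {R : Type*} [CommSemiring R] (r c d : R) (n : ℕ) :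
    ∑ m ∈ range n, (r ^ m * c + d) ^ 2 =
      c ^ 2 * ∑ m ∈ range n, (r ^ 2) ^ m + 2 * c * d * ∑ m ∈ range n, r ^ m + n * d ^ 2 := by
  simp only [add_sq, sum_add_distrib, mul_sum, sum_const, card_range, nsmul_eq_mul]
  congr 2 <;> refine sum_congr rfl fun m _ => by ring

theorem sum_range_add_three_eq {M : Type*} [AddCommMonoid M] (f : ℕ → M) (n : ℕ) :
    ∑ i ∈ range (n + 3), f i = f 0 + ∑ m ∈ range (n + 1), f (m + 1) + f (n + 2) := by
  rw [sum_range_succ, sum_range_succ', add_comm (∑ m ∈ range (n + 1), f (m + 1))]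

theorem Fin.extend_val_zero {n : ℕ} [NeZero n] {M : Type*} [Zero M] (f : Fin n → M) :
    Function.extend Fin.val f 0 0 = f 0 :=
  Fin.val_injective.extend_apply f 0 0

theorem Fin.extend_val_last {n : ℕ} {M : Type*} [Zero M] (f : Fin (n + 1) → M) :
    Function.extend Fin.val f 0 n = f (Fin.last n) :=
  Fin.val_injective.extend_apply f 0 (Fin.last n)

theorem Fin.sum_univ_eq_sum_range_extend {n : ℕ} {M N : Type*} [Zero M] [AddCommMonoid N]
    (g : ℕ → M → N) (f : Fin n → M) :
    ∑ v, g v.1 (f v) = ∑ i ∈ range n, g i (Function.extend Fin.val f 0 i) := by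
  rw [← Fin.sum_univ_eq_sum_range fun i => g i (Function.extend Fin.val f 0 i)]
  simp only [Fin.val_injective.extend_apply]

theorem tendsto_natCast_mul_pow_self {r : ℕ → ℝ} {ρ : ℝ} (hr : Tendsto r atTop (𝓝 ρ))
    (hρ : |ρ| < 1) : Tendsto (fun k : ℕ => (k : ℝ) * r k ^ k) atTop (𝓝 0) := by
  obtain ⟨c, hρc, hc⟩ := exists_between hρ
  have hle : ∀ᶠ k in atTop, |r k| ≤ c :=
    (hr.abs.eventually (gt_mem_nhds hρc)).mono fun _ h => h.le
  refine squeeze_zero_norm' (hle.mono fun k hk => ?_)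
    (tendsto_self_mul_const_pow_of_lt_one ((abs_nonneg ρ).trans hρc.le) hc)
  rw [norm_mul, norm_pow, Real.norm_natCast, Real.norm_eq_abs]
  gcongr

theorem tendsto_pow_self {r : ℕ → ℝ} {ρ : ℝ} (hr : Tendsto r atTop (𝓝 ρ)) (hρ : |ρ| < 1) :
    Tendsto (fun k : ℕ => r k ^ k) atTop (𝓝 0) := by
  have h := (tendsto_natCast_mul_pow_self hr hρ).norm
  rw [norm_zero] at h
  refine squeeze_zero_norm' ((eventually_ge_atTop 1).mono fun k hk => ?_) h
  rw [norm_mul]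
  exact le_mul_of_one_le_left (norm_nonneg _) (by simpa using hk)

theorem tendsto_geom_sum_range_succ {r : ℕ → ℝ} {ρ : ℝ} (hr : Tendsto r atTop (𝓝 ρ))
    (hρ : |ρ| < 1) :
    Tendsto (fun k : ℕ => ∑ m ∈ range (k + 1), r k ^ m) atTop (𝓝 (1 - ρ)⁻¹) := by
  have hρ1 : ρ - 1 ≠ 0 := sub_ne_zero.mpr (abs_lt.mp hρ).2.ne
  have hpow : Tendsto (fun k => r k ^ (k + 1)) atTop (𝓝 0) := by
    simpa [pow_succ] using (tendsto_pow_self hr hρ).mul hr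
  have hlim := (hpow.sub_const 1).div (hr.sub_const 1) hρ1
  rw [zero_sub, neg_div, ← div_neg, neg_sub, one_div] at hlim
  refine hlim.congr' ((hr.eventually_ne (sub_ne_zero.mp hρ1)).mono fun k hk => ?_)
  exact (geom_sum_eq hk _).symm

theorem PRadj_zero_iff_one (k j : ℕ) : PRadj k j 0 ↔ PRadj k j 1 := by
  unfold PRadj; omega

theorem PRadj_succ_iff {k m : ℕ} (hm : 1 ≤ m) (hmk : m ≤ k) (j : ℕ) :
    PRadj k j (m + 1) ↔ j = m := by
  unfold PRadj; omega

theorem PRadj_last_iff (k j : ℕ) : PRadj k j (k + 2) ↔ j = k + 1 ∨ j = k + 2 := by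
  unfold PRadj; omega

theorem PRdeg_succ {k m : ℕ} (hmk : m ≤ k) : PRdeg k (m + 1) = 3 := by
  rw [PRdeg, if_neg (by omega), if_neg (by omega)]

theorem PRdeg_last (k : ℕ) : PRdeg k (k + 2) = 1 := by
  simp [PRdeg]

/- A vertex vector is read as the sequence `x = Function.extend Fin.val π 0 : ℕ → ℝ`, so that
`C2, B1, …, Bk` is the stretch `m ↦ x (m + 1)`, `m ≤ k`, of a sequence. -/
namespace IsPageRank

variable {k : ℕ} {α : ℝ} {π : Fin (k + 3) → ℝ}

theorem extend_eq (hπ : IsPageRank k α π) {i : ℕ} (hi : i < k + 3) :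
    Function.extend Fin.val π 0 i = (1 - α) / ((k : ℝ) + 3) + ∑ j ∈ range (k + 3),
      if PRadj k j i then α / PRdeg k j * Function.extend Fin.val π 0 j else 0 := by
  obtain ⟨-, hsum, hfix⟩ := hπ
  set x := Function.extend Fin.val π 0
  have hx : ∀ v : Fin (k + 3), x v = π v := Fin.val_injective.extend_apply π 0
  have hrow : ∀ j, PRmat k α ⟨i, hi⟩ j * π j = (1 - α) / ((k : ℝ) + 3) * π j +
      if PRadj k j i then α / PRdeg k j * x j else 0 := fun j => by
    simp only [PRmat, hx]
    split_ifs <;> ring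
  rw [← Fin.sum_univ_eq_sum_range fun j => if PRadj k j i then α / PRdeg k j * x j else 0,
    show x i = π ⟨i, hi⟩ from hx ⟨i, hi⟩, ← congrFun hfix, Matrix.mulVec, dotProduct,
    sum_congr rfl fun j _ => hrow j, sum_add_distrib, ← mul_sum, hsum, mul_one]

theorem extend_one_eq_extend_zero (hπ : IsPageRank k α π) :
    Function.extend Fin.val π 0 1 = Function.extend Fin.val π 0 0 := by
  rw [hπ.extend_eq (by omega), hπ.extend_eq (by omega)]
  simp only [PRadj_zero_iff_one]

theorem extend_succ_eq {m : ℕ} (hπ : IsPageRank k α π) (hm : 1 ≤ m) (hmk : m ≤ k) :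
    Function.extend Fin.val π 0 (m + 1) =
      (1 - α) / ((k : ℝ) + 3) + α / 3 * Function.extend Fin.val π 0 m := by
  rw [hπ.extend_eq (by omega)]
  simp only [PRadj_succ_iff hm hmk, sum_ite_eq', mem_range]
  rw [if_pos (by omega), ← Nat.sub_add_cancel hm, PRdeg_succ (by omega)]
  norm_num

theorem extend_last_eq (hπ : IsPageRank k α π) :
    Function.extend Fin.val π 0 (k + 2) = (1 - α) / ((k : ℝ) + 3) +
      α / 3 * Function.extend Fin.val π 0 (k + 1) + α * Function.extend Fin.val π 0 (k + 2) := by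
  conv_lhs => rw [hπ.extend_eq (by omega)]
  rw [add_assoc]
  simp only [PRadj_last_iff]
  rw [sum_eq_add (k + 1) (k + 2) (by omega) (fun j _ hj => if_neg (by omega))
    (fun h => by simp at h) (fun h => by simp at h), if_pos (Or.inl rfl), if_pos (Or.inr rfl),
    PRdeg_succ le_rfl, PRdeg_last]
  norm_num

variable {d : ℝ}

theorem extend_succ_eq_pow_mul_add (hπ : IsPageRank k α π)
    (hd : (1 - α) / ((k : ℝ) + 3) + α / 3 * d = d) {m : ℕ} (hm : m ≤ k) :
    Function.extend Fin.val π 0 (m + 1) = (α / 3) ^ m * (π 0 - d) + d := by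
  have h := eq_pow_mul_add_of_affine_recurrence
    (x := fun m => Function.extend Fin.val π 0 (m + 1)) hd
    (fun m hm => hπ.extend_succ_eq (m := m + 1) (by omega) hm) m hm
  rwa [zero_add, hπ.extend_one_eq_extend_zero, Fin.extend_val_zero] at h

theorem add_sum_add_last_eq_one (hπ : IsPageRank k α π)
    (hd : (1 - α) / ((k : ℝ) + 3) + α / 3 * d = d) :
    π 0 + (π 0 - d) * ∑ m ∈ range (k + 1), (α / 3) ^ m + ((k : ℝ) + 1) * d +
      π (Fin.last (k + 2)) = 1 := by
  have h := hπ.2.1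
  rw [Fin.sum_univ_eq_sum_range_extend fun _ y => y, sum_range_add_three_eq,
    sum_congr rfl fun m hm =>
      hπ.extend_succ_eq_pow_mul_add hd (Nat.lt_succ_iff.mp (mem_range.mp hm)),
    sum_range_pow_mul_add, Fin.extend_val_zero, Fin.extend_val_last] at h
  push_cast at h
  linear_combination h

theorem one_sub_mul_last_eq (hπ : IsPageRank k α π)
    (hd : (1 - α) / ((k : ℝ) + 3) + α / 3 * d = d) :
    (1 - α) * π (Fin.last (k + 2)) = (α / 3) ^ (k + 1) * (π 0 - d) + d := by
  have h := hπ.extend_last_eq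
  rw [hπ.extend_succ_eq_pow_mul_add hd le_rfl, Fin.extend_val_last] at h
  linear_combination h + hd

theorem sum_sq_indicator_last_sub_eq (hπ : IsPageRank k α π)
    (hd : (1 - α) / ((k : ℝ) + 3) + α / 3 * d = d) :
    ∑ v : Fin (k + 3), ((if v.1 = k + 2 then 1 else 0) - π v) ^ 2 =
      π 0 ^ 2 + ((π 0 - d) ^ 2 * ∑ m ∈ range (k + 1), ((α / 3) ^ 2) ^ m +
        2 * (π 0 - d) * d * ∑ m ∈ range (k + 1), (α / 3) ^ m + ((k : ℝ) + 1) * d ^ 2) +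
      (1 - π (Fin.last (k + 2))) ^ 2 := by
  have hmid : ∀ m ∈ range (k + 1),
      ((if m + 1 = k + 2 then 1 else 0) - Function.extend Fin.val π 0 (m + 1)) ^ 2 =
        ((α / 3) ^ m * (π 0 - d) + d) ^ 2 := fun m hm => by
    have hmk := Nat.lt_succ_iff.mp (mem_range.mp hm)
    rw [if_neg (by omega), zero_sub, neg_sq, hπ.extend_succ_eq_pow_mul_add hd hmk]
  rw [Fin.sum_univ_eq_sum_range_extend fun i y => ((if i = k + 2 then 1 else 0) - y) ^ 2,
    sum_range_add_three_eq, sum_congr rfl hmid, sum_range_sq_pow_mul_add, Fin.extend_val_zero,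
    Fin.extend_val_last]
  push_cast
  simp

end IsPageRank

theorem tendsto_of_pageRank_relations {r d a p : ℕ → ℝ} (hr : Tendsto r atTop (𝓝 (1 / 3)))
    (hd0 : Tendsto d atTop (𝓝 0)) (hd : Tendsto (fun k : ℕ => ((k : ℝ) + 1) * d k) atTop (𝓝 0))
    (hsum : ∀ᶠ k in atTop,
      a k + (a k - d k) * ∑ m ∈ range (k + 1), r k ^ m + ((k : ℝ) + 1) * d k + p k = 1)
    (hp : ∀ᶠ k in atTop, p k = k * (r k ^ (k + 1) * (a k - d k) + d k)) :
    Tendsto a atTop (𝓝 (2 / 5)) ∧ Tendsto p atTop (𝓝 0) := by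
  have hG : Tendsto (fun k : ℕ => ∑ m ∈ range (k + 1), r k ^ m) atTop (𝓝 (3 / 2)) := by
    convert tendsto_geom_sum_range_succ hr (by norm_num [abs_of_pos]) using 2; norm_num
  have hkr : Tendsto (fun k : ℕ => (k : ℝ) * r k ^ (k + 1)) atTop (𝓝 0) := by
    simpa [pow_succ, mul_assoc] using
      (tendsto_natCast_mul_pow_self hr (by norm_num [abs_of_pos])).mul hr
  have hkd : Tendsto (fun k : ℕ => (k : ℝ) * d k) atTop (𝓝 0) := by
    simpa [add_mul] using hd.sub hd0
  -- eliminating `p` leaves a linear equation for `a` whose coefficients converge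
  have hD := ((tendsto_const_nhds (x := (1 : ℝ))).add hG).add hkr
  have hN := ((((tendsto_const_nhds (x := (1 : ℝ))).add (hd0.mul hG)).add (hkr.mul hd0)).sub
    hd).sub hkd
  have ha : Tendsto a atTop (𝓝 (2 / 5)) := by
    have h := hN.div hD (by norm_num)
    norm_num at h
    refine h.congr' ?_
    filter_upwards [hsum, hp, hD.eventually_ne (by norm_num : (1 : ℝ) + 3 / 2 + 0 ≠ 0)]
      with k hsum hp hD0
    rw [hp] at hsum
    rw [Pi.div_apply, div_eq_iff hD0]
    linear_combination -hsum
  have hp0 := (hkr.mul (ha.sub hd0)).add hkd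
  rw [zero_mul, zero_add] at hp0
  refine ⟨ha, hp0.congr' ?_⟩
  filter_upwards [hp] with k hp
  rw [hp]; ring

theorem tendsto_three_div_add_three_mul_two_mul_add_one :
    Tendsto (fun k : ℕ => 3 / (((k : ℝ) + 3) * (2 * k + 1))) atTop (𝓝 0) := by
  have h := tendsto_one_div_add_atTop_nhds_zero_nat.const_mul (3 : ℝ)
  rw [mul_zero] at h
  refine squeeze_zero (fun k => by positivity) (fun k => ?_) h
  rw [mul_one_div]
  gcongr
  nlinarith

theorem tendsto_succ_mul_three_div_add_three_mul_two_mul_add_one :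
    Tendsto (fun k : ℕ => ((k : ℝ) + 1) * (3 / (((k : ℝ) + 3) * (2 * k + 1)))) atTop (𝓝 0) := by
  have h := tendsto_one_div_add_atTop_nhds_zero_nat.const_mul (3 : ℝ)
  rw [mul_zero] at h
  refine squeeze_zero (fun k => by positivity) (fun k => ?_) h
  rw [mul_one_div, mul_div_assoc', div_le_div_iff₀ (by positivity) (by positivity)]
  nlinarith

-- `3 / ((k + 3) (2k + 1)) = t / (1 - r)` for `t = (1 - α) / (k + 3)`, `r = α / 3`, `α = 1 - 1/k`.
theorem pageRank_fixedPoint {k : ℕ} (hk : k ≠ 0) :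
    (1 - (1 - 1 / (k : ℝ))) / ((k : ℝ) + 3) +
        (1 - 1 / (k : ℝ)) / 3 * (3 / ((k + 3) * (2 * k + 1))) =
      3 / ((k + 3) * (2 * k + 1)) := by
  field_simp
  ring

/-- If `π k` is the PageRank vector of `Γ(k)` for `α = 1 - 1/k` and `σ k` is the
PageRank vector of `Γ(k)` for `α = 1` (value `1` at `A`, `0` elsewhere), then
`‖σ(k) - π(k)‖₂ → √(67/50)` as `k → ∞`. -/
theorem pagerank_diff_norm_tendsto (π : ∀ k : ℕ, Fin (k + 3) → ℝ)
    (hπ : ∀ k, 2 ≤ k → IsPageRank k (1 - 1 / (k : ℝ)) (π k))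
    (σ : ∀ k : ℕ, Fin (k + 3) → ℝ)
    (hσ : ∀ k, σ k = fun v => if v.1 = k + 2 then (1 : ℝ) else 0) :
    Filter.Tendsto (fun k : ℕ => Real.sqrt (∑ v, (σ k v - π k v) ^ 2))
      Filter.atTop (nhds (Real.sqrt (67 / 50))) := by
  have hr : Tendsto (fun k : ℕ => (1 - 1 / (k : ℝ)) / 3) atTop (𝓝 (1 / 3)) := by
    simpa using (tendsto_one_div_atTop_nhds_zero_nat.const_sub (1 : ℝ)).div_const 3
  have hd0 := tendsto_three_div_add_three_mul_two_mul_add_one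
  have hd := tendsto_succ_mul_three_div_add_three_mul_two_mul_add_one
  have hfix : ∀ k : ℕ, 2 ≤ k → _ := fun k hk => pageRank_fixedPoint (k := k) (by omega)
  obtain ⟨ha, hp⟩ := tendsto_of_pageRank_relations (a := fun k => π k 0)
    (p := fun k => π k (Fin.last (k + 2))) hr hd0 hd
    (by filter_upwards [eventually_ge_atTop 2] with k hk
        using (hπ k hk).add_sum_add_last_eq_one (hfix k hk))
    (by filter_upwards [eventually_ge_atTop 2] with k hk
        rw [← (hπ k hk).one_sub_mul_last_eq (hfix k hk)]
        field_simp
        ring)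
  have hG := tendsto_geom_sum_range_succ hr (by norm_num [abs_of_pos])
  have hH := tendsto_geom_sum_range_succ (hr.pow 2) (by norm_num [abs_of_pos])
  have hmid := ((((ha.sub hd0).pow 2).mul hH).add
    ((((tendsto_const_nhds (x := (2 : ℝ))).mul (ha.sub hd0)).mul hd0).mul hG)).add (hd.mul hd0)
  have hsq := ((ha.pow 2).add hmid).add (((tendsto_const_nhds (x := (1 : ℝ))).sub hp).pow 2)
  refine (Real.continuous_sqrt.tendsto _).comp ?_
  convert hsq.congr' ?_ using 2
  · norm_num
  filter_upwards [eventually_ge_atTop 2] with k hk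
  simp only [hσ, (hπ k hk).sum_sq_indicator_last_sub_eq (hfix k hk)]
  ring
end
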